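/- arXiv:1811.03254 — 8 statements merged into one kernel-verified Lean document; each statement's English description precedes it below -/
import Mathlib

section
/- Let Ψ : ℝ → ℝ be convex, Γ > 0, W(d, g, x) = g·d + Γd²/2 + Ψ(x + d) − Ψ(x), d̂(g, x) = argmin_d W(d, g, x), and Ŵ(g, x) = −min_d W(d, g, x). Then for any g₁, g₂, x₁, x₂ ∈ ℝ: |d̂(g₁, x₁) − d̂(g₂, x₂)| ≤ |x₁ − x₂| + |g₁ − g₂|/Γ, and hence (d̂(g₁, x₁) − d̂(g₂, x₂))² ≤ 2(x₁ − x₂)² + (2/Γ²)(g₁ − g₂)². -/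
private lemma eps_aux (A B K : ℝ) (hK : 0 ≤ K)
    (h : ∀ t : ℝ, 0 < t → t ≤ 1 → A ≤ B + t * K) : A ≤ B := by
  refine le_of_forall_pos_le_add fun ε hε => ?_
  have hK1 : (0:ℝ) < K + 1 := by linarith
  have ht : 0 < min 1 (ε / (K + 1)) := lt_min one_pos (div_pos hε hK1)
  have h1 := h _ ht (min_le_left _ _)
  have h2 : min 1 (ε / (K + 1)) * K ≤ ε := by
    have h2a : min 1 (ε / (K + 1)) * K ≤ (ε / (K + 1)) * K :=
      mul_le_mul_of_nonneg_right (min_le_right _ _) hK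
    have h3 : (ε / (K + 1)) * K ≤ ε := by
      rw [div_mul_eq_mul_div, div_le_iff₀ hK1]
      nlinarith
    linarith
  linarith

private lemma lip_g (Ψ : ℝ → ℝ) (hΨ : ConvexOn ℝ Set.univ Ψ) (Γ : ℝ) (hΓ : 0 < Γ)
    (dhat : ℝ → ℝ → ℝ)
    (hdhat : ∀ g x d : ℝ,
      g * dhat g x + Γ * (dhat g x) ^ 2 / 2 + Ψ (x + dhat g x) - Ψ x
        ≤ g * d + Γ * d ^ 2 / 2 + Ψ (x + d) - Ψ x)
    (g g' x : ℝ) : |dhat g x - dhat g' x| ≤ |g - g'| / Γ := by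
  obtain ⟨a, ha⟩ : ∃ a, dhat g x = a := ⟨_, rfl⟩
  obtain ⟨b, hb⟩ : ∃ b, dhat g' x = b := ⟨_, rfl⟩
  rw [ha, hb]
  have key : Γ * (a - b) ^ 2 ≤ (g - g') * (b - a) := by
    refine eps_aux _ _ (Γ * (a - b) ^ 2) (by positivity) (fun t ht ht1 => ?_)
    have h1 := hdhat g x (a + t * (b - a))
    have h2 := hdhat g' x (b + t * (a - b))
    rw [ha] at h1
    rw [hb] at h2
    have hc1 := hΨ.2 (Set.mem_univ (x + a)) (Set.mem_univ (x + b))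
      (by linarith : (0:ℝ) ≤ 1 - t) ht.le (by ring)
    have hc2 := hΨ.2 (Set.mem_univ (x + b)) (Set.mem_univ (x + a))
      (by linarith : (0:ℝ) ≤ 1 - t) ht.le (by ring)
    simp only [smul_eq_mul] at hc1 hc2
    have e1 : (1 - t) * (x + a) + t * (x + b) = x + (a + t * (b - a)) := by ring
    have e2 : (1 - t) * (x + b) + t * (x + a) = x + (b + t * (a - b)) := by ring
    rw [e1] at hc1
    rw [e2] at hc2
    have h0 : t * 0 ≤ t * ((g - g') * (b - a) + t * (Γ * (a - b) ^ 2) - Γ * (a - b) ^ 2) := by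
      nlinarith [h1, h2, hc1, hc2]
    have := le_of_mul_le_mul_left h0 ht
    linarith
  have h3 : (g - g') * (b - a) ≤ |g - g'| * |a - b| := by
    calc (g - g') * (b - a) ≤ |(g - g') * (b - a)| := le_abs_self _
      _ = |g - g'| * |a - b| := by rw [abs_mul, abs_sub_comm b a]
  rcases (abs_nonneg (a - b)).eq_or_lt with h4 | h4
  · rw [← h4]; positivity
  · rw [le_div_iff₀ hΓ]
    nlinarith [key, h3, sq_abs (a - b)]

private lemma lip_x (Ψ : ℝ → ℝ) (hΨ : ConvexOn ℝ Set.univ Ψ) (Γ : ℝ) (hΓ : 0 < Γ)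
    (dhat : ℝ → ℝ → ℝ)
    (hdhat : ∀ g x d : ℝ,
      g * dhat g x + Γ * (dhat g x) ^ 2 / 2 + Ψ (x + dhat g x) - Ψ x
        ≤ g * d + Γ * d ^ 2 / 2 + Ψ (x + d) - Ψ x)
    (g x x' : ℝ) : |dhat g x - dhat g x'| ≤ |x - x'| := by
  obtain ⟨a, ha⟩ : ∃ a, dhat g x = a := ⟨_, rfl⟩
  obtain ⟨b, hb⟩ : ∃ b, dhat g x' = b := ⟨_, rfl⟩
  rw [ha, hb]
  have key : -((x' + b - x - a) * (a - b)) ≤ 0 := by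
    refine eps_aux _ _ ((x' + b - x - a) ^ 2) (by positivity) (fun t ht ht1 => ?_)
    have h1 := hdhat g x (a + t * (x' + b - x - a))
    have h2 := hdhat g x' (b - t * (x' + b - x - a))
    rw [ha] at h1
    rw [hb] at h2
    have hc1 := hΨ.2 (Set.mem_univ (x + a)) (Set.mem_univ (x' + b))
      (by linarith : (0:ℝ) ≤ 1 - t) ht.le (by ring)
    have hc2 := hΨ.2 (Set.mem_univ (x' + b)) (Set.mem_univ (x + a))
      (by linarith : (0:ℝ) ≤ 1 - t) ht.le (by ring)
    simp only [smul_eq_mul] at hc1 hc2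
    have e1 : (1 - t) * (x + a) + t * (x' + b) = x + (a + t * (x' + b - x - a)) := by ring
    have e2 : (1 - t) * (x' + b) + t * (x + a) = x' + (b - t * (x' + b - x - a)) := by ring
    rw [e1] at hc1
    rw [e2] at hc2
    have h0 : (Γ * t) * (-((x' + b - x - a) * (a - b)))
        ≤ (Γ * t) * (0 + t * (x' + b - x - a) ^ 2) := by
      nlinarith [h1, h2, hc1, hc2]
    exact le_of_mul_le_mul_left h0 (mul_pos hΓ ht)
  have key2 : (a - b) ^ 2 ≤ (x' - x) * (a - b) := by nlinarith [key]
  have h3 : (x' - x) * (a - b) ≤ |x - x'| * |a - b| := by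
    calc (x' - x) * (a - b) ≤ |(x' - x) * (a - b)| := le_abs_self _
      _ = |x - x'| * |a - b| := by rw [abs_mul, abs_sub_comm x' x]
  rcases (abs_nonneg (a - b)).eq_or_lt with h4 | h4
  · rw [← h4]; positivity
  · nlinarith [key2, h3, sq_abs (a - b)]

/-- Combined Lipschitz bound for the proximal step in both arguments:
`|d̂(g₁,x₁) − d̂(g₂,x₂)| ≤ |x₁ − x₂| + |g₁ − g₂|/Γ`, and hence
`(d̂(g₁,x₁) − d̂(g₂,x₂))² ≤ 2(x₁ − x₂)² + (2/Γ²)(g₁ − g₂)²`. -/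
theorem dhat_lipschitz_combined
    (Ψ : ℝ → ℝ) (hΨ : ConvexOn ℝ Set.univ Ψ) (Γ : ℝ) (hΓ : 0 < Γ)
    (dhat : ℝ → ℝ → ℝ)
    (hdhat : ∀ g x d : ℝ,
      g * dhat g x + Γ * (dhat g x) ^ 2 / 2 + Ψ (x + dhat g x) - Ψ x
        ≤ g * d + Γ * d ^ 2 / 2 + Ψ (x + d) - Ψ x)
    (g₁ g₂ x₁ x₂ : ℝ) :
    |dhat g₁ x₁ - dhat g₂ x₂| ≤ |x₁ - x₂| + |g₁ - g₂| / Γ ∧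
    (dhat g₁ x₁ - dhat g₂ x₂) ^ 2 ≤ 2 * (x₁ - x₂) ^ 2 + 2 / Γ ^ 2 * (g₁ - g₂) ^ 2 := by
  have h1 : |dhat g₁ x₁ - dhat g₂ x₁| ≤ |g₁ - g₂| / Γ := lip_g Ψ hΨ Γ hΓ dhat hdhat g₁ g₂ x₁
  have h2 : |dhat g₂ x₁ - dhat g₂ x₂| ≤ |x₁ - x₂| := lip_x Ψ hΨ Γ hΓ dhat hdhat g₂ x₁ x₂
  have htri : |dhat g₁ x₁ - dhat g₂ x₂| ≤ |x₁ - x₂| + |g₁ - g₂| / Γ := by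
    calc |dhat g₁ x₁ - dhat g₂ x₂|
        ≤ |dhat g₁ x₁ - dhat g₂ x₁| + |dhat g₂ x₁ - dhat g₂ x₂| := abs_sub_le _ _ _
      _ ≤ |x₁ - x₂| + |g₁ - g₂| / Γ := by linarith
  refine ⟨htri, ?_⟩
  have hsq' : 2 / Γ ^ 2 * (g₁ - g₂) ^ 2 = 2 * (|g₁ - g₂| / Γ) ^ 2 := by
    rw [div_pow, sq_abs]; ring
  have hsqx : (x₁ - x₂) ^ 2 = |x₁ - x₂| ^ 2 := (sq_abs _).symm
  rw [hsq', hsqx]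
  have hnn := abs_nonneg (dhat g₁ x₁ - dhat g₂ x₂)
  nlinarith [htri, sq_abs (dhat g₁ x₁ - dhat g₂ x₂),
    sq_nonneg (|x₁ - x₂| - |g₁ - g₂| / Γ), abs_nonneg (x₁ - x₂),
    div_nonneg (abs_nonneg (g₁ - g₂)) hΓ.le]
end

section
/- Let Ψ : ℝ → ℝ be convex, Γ > 0, W(d, g, x) = g·d + Γd²/2 + Ψ(x + d) − Ψ(x), d̂(g, x) = argmin_d W(d, g, x), and Ŵ(g, x) = −min_d W(d, g, x). Then Ŵ(g, x) ≥ (Γ/2)·(d̂(g, x))² for all g, x ∈ ℝ. -/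
/-- The progress term dominates the quadratic of the step:
`Ŵ(g,x) = −min_d W(d,g,x) ≥ (Γ/2)·(d̂(g,x))²` for all `g, x`, where
`W(d,g,x) = g·d + Γ d²/2 + Ψ(x+d) − Ψ x` and `d̂(g,x)` is its minimizer. -/
theorem What_ge_quadratic
    (Ψ : ℝ → ℝ) (hΨ : ConvexOn ℝ Set.univ Ψ) (Γ : ℝ) (hΓ : 0 < Γ)
    (dhat : ℝ → ℝ → ℝ)
    (hdhat : ∀ g x d : ℝ,
      g * dhat g x + Γ * (dhat g x) ^ 2 / 2 + Ψ (x + dhat g x) - Ψ x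
        ≤ g * d + Γ * d ^ 2 / 2 + Ψ (x + d) - Ψ x)
    (g x : ℝ) :
    -(g * dhat g x + Γ * (dhat g x) ^ 2 / 2 + Ψ (x + dhat g x) - Ψ x)
      ≥ Γ / 2 * (dhat g x) ^ 2 := by
  set d := dhat g x with hd
  set W : ℝ := g * d + Γ * d ^ 2 / 2 + Ψ (x + d) - Ψ x with hW
  -- key estimate: for 0 ≤ t < 1, W ≤ -(Γ * t * d^2 / 2)
  have key : ∀ t : ℝ, 0 ≤ t → t < 1 → W ≤ -(Γ * t * d ^ 2 / 2) := by
    intro t ht0 ht1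
    have h1 : W ≤ g * (t * d) + Γ * (t * d) ^ 2 / 2 + Ψ (x + t * d) - Ψ x :=
      hdhat g x (t * d)
    have hconv : Ψ (x + t * d) ≤ (1 - t) * Ψ x + t * Ψ (x + d) := by
      have := hΨ.2 (Set.mem_univ x) (Set.mem_univ (x + d))
        (by linarith : (0:ℝ) ≤ 1 - t) ht0 (by ring)
      simpa [smul_eq_mul, show (1 - t) * x + t * (x + d) = x + t * d by ring]
        using this
    have h2 : W ≤ t * g * d + Γ * t ^ 2 * d ^ 2 / 2 + t * (Ψ (x + d) - Ψ x) := by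
      nlinarith [h1, hconv]
    -- rearrange: (1-t)*(g*d + (Ψ(x+d)-Ψx)) ≤ -Γ*(1-t)*(1+t)*d^2/2
    have h3 : (1 - t) * (g * d + (Ψ (x + d) - Ψ x)) ≤
        -(Γ * (1 - t) * (1 + t) * d ^ 2 / 2) := by
      nlinarith [h2]
    have h4 : g * d + (Ψ (x + d) - Ψ x) ≤ -(Γ * (1 + t) * d ^ 2 / 2) := by
      have htpos : 0 < 1 - t := by linarith
      nlinarith [h3, htpos]
    nlinarith [h4]
  have main : W ≤ -(Γ / 2 * d ^ 2) := by
    rcases eq_or_ne d 0 with h0 | h0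
    · have := key 0 le_rfl one_pos
      simp [h0] at this ⊢
      linarith
    · have hd2 : 0 < Γ * d ^ 2 := by positivity
      refine le_of_forall_pos_le_add ?_
      intro ε hε
      by_cases hc : Γ * d ^ 2 / 2 ≤ ε
      · have h5 := key 0 le_rfl one_pos
        linarith [h5, hc]
      · push_neg at hc
        set t : ℝ := 1 - 2 * ε / (Γ * d ^ 2) with htdef
        have ht0 : 0 ≤ t := by
          rw [htdef]
          rw [sub_nonneg, div_le_one hd2]
          linarith
        have ht1 : t < 1 := by
          rw [htdef]
          have : 0 < 2 * ε / (Γ * d ^ 2) := by positivity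
          linarith
        have := key t ht0 ht1
        have heq : -(Γ * t * d ^ 2 / 2) = -(Γ / 2 * d ^ 2) + ε := by
          rw [htdef]; field_simp; ring
        linarith [this, heq.le]
  linarith
end

section
/- Let Ψ : ℝ → ℝ be convex, Γ > 0, W(d, g, x) = g·d + Γd²/2 + Ψ(x + d) − Ψ(x), and Ŵ(g, x) = −min_d W(d, g, x). Then for any g, g', x ∈ ℝ: Ŵ(g, x) ≥ (2/3)·Ŵ(g', x) − (4/(3Γ))·(g − g')². -/
/-- Strong-convexity lower bound at a minimizer of `d ↦ g d + Γ d²/2 + Ψ(x+d) - Ψ x`. -/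
lemma strong_min_aux (Ψ : ℝ → ℝ) (hΨ : ConvexOn ℝ Set.univ Ψ) (Γ : ℝ) (hΓ : 0 < Γ)
    (g x δ : ℝ)
    (hmin : ∀ d : ℝ, g * δ + Γ * δ ^ 2 / 2 + Ψ (x + δ) - Ψ x
      ≤ g * d + Γ * d ^ 2 / 2 + Ψ (x + d) - Ψ x)
    (d : ℝ) :
    g * δ + Γ * δ ^ 2 / 2 + Ψ (x + δ) - Ψ x + Γ / 2 * (d - δ) ^ 2
      ≤ g * d + Γ * d ^ 2 / 2 + Ψ (x + d) - Ψ x := by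
  set c : ℝ := Γ / 2 * (d - δ) ^ 2 with hc
  set M : ℝ := (g * d + Γ * d ^ 2 / 2 + Ψ (x + d) - Ψ x)
      - (g * δ + Γ * δ ^ 2 / 2 + Ψ (x + δ) - Ψ x) with hM
  have hM0 : 0 ≤ M := by have := hmin d; rw [hM]; linarith
  have claim : ∀ t : ℝ, 0 < t → t < 1 → (1 - t) * c ≤ M := by
    intro t ht0 ht1
    have hmd := hmin (δ + t * (d - δ))
    have hconv := hΨ.2 (Set.mem_univ (x + δ)) (Set.mem_univ (x + d))
      (by linarith : (0:ℝ) ≤ 1 - t) ht0.le (by ring)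
    simp only [smul_eq_mul] at hconv
    have hpt : (1 - t) * (x + δ) + t * (x + d) = x + (δ + t * (d - δ)) := by ring
    rw [hpt] at hconv
    have h2 : t * ((1 - t) * c) ≤ t * M := by
      rw [hM, hc]; nlinarith [hmd, hconv]
    exact le_of_mul_le_mul_left h2 ht0
  by_contra hcon
  push_neg at hcon
  have hMc : M < c := by rw [hM, hc]; linarith
  have hc0 : 0 < c := lt_of_le_of_lt hM0 hMc
  have ht0 : 0 < (c - M) / (2 * c) := div_pos (by linarith) (by linarith)
  have ht1 : (c - M) / (2 * c) < 1 := by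
    rw [div_lt_one (by positivity)]; linarith
  have hcl := claim _ ht0 ht1
  have heq : (1 - (c - M) / (2 * c)) * c = (c + M) / 2 := by
    field_simp; ring
  rw [heq] at hcl
  linarith

/-- `Ŵ` shifting on the gradient parameter:
`Ŵ(g,x) ≥ (2/3)·Ŵ(g',x) − (4/(3Γ))·(g − g')²`, where
`Ŵ(g,x) = −min_d {g·d + Γ d²/2 + Ψ(x+d) − Ψ x}` with minimizer `d̂(g,x)`. -/
theorem What_shift_g
    (Ψ : ℝ → ℝ) (hΨ : ConvexOn ℝ Set.univ Ψ) (Γ : ℝ) (hΓ : 0 < Γ)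
    (dhat : ℝ → ℝ → ℝ)
    (hdhat : ∀ g x d : ℝ,
      g * dhat g x + Γ * (dhat g x) ^ 2 / 2 + Ψ (x + dhat g x) - Ψ x
        ≤ g * d + Γ * d ^ 2 / 2 + Ψ (x + d) - Ψ x)
    (g g' x : ℝ) :
    -(g * dhat g x + Γ * (dhat g x) ^ 2 / 2 + Ψ (x + dhat g x) - Ψ x)
      ≥ 2 / 3 * -(g' * dhat g' x + Γ * (dhat g' x) ^ 2 / 2 + Ψ (x + dhat g' x) - Ψ x)
        - 4 / (3 * Γ) * (g - g') ^ 2 := by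
  set δ := dhat g x with hδ
  set d' := dhat g' x with hd'
  -- A ≥ B - (g-g') d'
  have h1 := hdhat g x d'
  -- A ≥ Γ/2 δ²  (strong min at 0)
  have h2 := strong_min_aux Ψ hΨ Γ hΓ g x δ (hdhat g x) 0
  simp only [add_zero, mul_zero] at h2
  -- Lipschitz: Γ (d'-δ)² ≤ (g-g')(d'-δ)
  have h3a := strong_min_aux Ψ hΨ Γ hΓ g x δ (hdhat g x) d'
  have h3b := strong_min_aux Ψ hΨ Γ hΓ g' x d' (hdhat g' x) δ
  have h3 : Γ * (d' - δ) ^ 2 ≤ (g - g') * (d' - δ) := by nlinarith [h3a, h3b]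
  -- B ≥ Γ/2 d'²
  have h4 := strong_min_aux Ψ hΨ Γ hΓ g' x d' (hdhat g' x) 0
  simp only [add_zero, mul_zero] at h4
  have key : 2 * Γ * -(g' * d' + Γ * d' ^ 2 / 2 + Ψ (x + d') - Ψ x)
      ≤ 3 * Γ * -(g * δ + Γ * δ ^ 2 / 2 + Ψ (x + δ) - Ψ x) + 4 * (g - g') ^ 2 := by
    nlinarith [h1, h2, h3, h4, sq_nonneg (g - g' - Γ * (d' - δ)),
      sq_nonneg (Γ * δ - 2 * (g - g')), hΓ, sq_nonneg (d' - δ)]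
  rw [ge_iff_le, ← sub_nonneg]
  have heq : -(g * δ + Γ * δ ^ 2 / 2 + Ψ (x + δ) - Ψ x)
      - (2 / 3 * -(g' * d' + Γ * d' ^ 2 / 2 + Ψ (x + d') - Ψ x)
        - 4 / (3 * Γ) * (g - g') ^ 2)
      = (3 * Γ * -(g * δ + Γ * δ ^ 2 / 2 + Ψ (x + δ) - Ψ x) + 4 * (g - g') ^ 2
        - 2 * Γ * -(g' * d' + Γ * d' ^ 2 / 2 + Ψ (x + d') - Ψ x)) / (3 * Γ) := by
    field_simp; ring
  rw [heq]
  apply div_nonneg _ (by positivity)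
  linarith
end

section
/- Let F(x) = f(x) + Σ_{k=1}^n Ψ_k(x_k) where f : ℝⁿ → ℝ is convex and differentiable with coordinate Lipschitz constants L_k (i.e., |∇_k f(x + r·e_k) − ∇_k f(x)| ≤ L_k·|r| for all x, r), and each Ψ_k : ℝ → ℝ is convex. Suppose Γ ≥ max_k L_k. Fix a coordinate j and a point x^t; let g_j = ∇_j f(x^t), let g̃_j ∈ ℝ (an inexact gradient value), let d̃_j = argmin_d { g̃_j·d + Γd²/2 + Ψ_j(x_j^t + d) − Ψ_j(x_j^t) }, and let x^{t+1} = x^t + d̃_j·e_j. Define Ŵ_j(g, x) = −min_d { g·d + Γd²/2 + Ψ_j(x + d) − Ψ_j(x) }. Then: F(x^t) − F(x^{t+1}) ≥ (Γ/4)·(d̃_j)² − (1/Γ)·(g_j − g̃_j)². -/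
/-!
The coordinate-wise Lipschitz bound on the gradient gives the one-dimensional descent lemma
`f(xᵗ⁺¹) ≤ f(xᵗ) + g_j d̃_j + (Γ/2) d̃_j²`. Because the proximal objective is `Γ`-strongly convex,
its minimiser beats the trivial step `d = 0` by `(Γ/2) d̃_j²`, i.e.
`Ψ_j(x_j) - Ψ_j(x_j + d̃_j) ≥ g̃_j d̃_j + Γ d̃_j²`. Adding the two leaves
`(g̃_j - g_j) d̃_j + (Γ/2) d̃_j²`, and Young's inequality absorbs the cross term.
-/

open Set Filter Topology Function

lemma image_add_le_of_deriv_lipschitz {φ φ' : ℝ → ℝ} {L a : ℝ}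
    (hφ : ∀ s, HasDerivAt φ (φ' s) s) (hlip : ∀ r, |φ' (a + r) - φ' a| ≤ L * |r|) (d : ℝ) :
    φ (a + d) ≤ φ a + φ' a * d + L / 2 * d ^ 2 := by
  set ψ : ℝ → ℝ := fun t => φ (a + t * d) - t * (φ' a * d) - L / 2 * t ^ 2 * d ^ 2
  have hψ : ∀ t, HasDerivAt ψ ((φ' (a + t * d) - φ' a) * d - L * t * d ^ 2) t := by
    intro t
    have hφt := (hφ (a + t * d)).comp t (((hasDerivAt_id t).mul_const d).const_add a)
    refine ((hφt.sub ((hasDerivAt_id t).mul_const (φ' a * d))).sub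
      (((hasDerivAt_pow 2 t).const_mul (L / 2)).mul_const (d ^ 2))).congr_deriv ?_
    push_cast
    ring
  have hψ'_nonpos : ∀ t ∈ interior (Ici (0 : ℝ)),
      (φ' (a + t * d) - φ' a) * d - L * t * d ^ 2 ≤ 0 := by
    intro t ht
    rw [interior_Ici, mem_Ioi] at ht
    refine sub_nonpos.2 ?_
    calc (φ' (a + t * d) - φ' a) * d ≤ |φ' (a + t * d) - φ' a| * |d| := by
          rw [← abs_mul]; exact le_abs_self _
      _ ≤ L * |t * d| * |d| := by gcongr; exact hlip _
      _ = L * t * d ^ 2 := by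
          rw [abs_mul, abs_of_pos ht, mul_assoc, mul_assoc, abs_mul_abs_self, sq]; ring
  have hanti : AntitoneOn ψ (Ici 0) :=
    antitoneOn_of_hasDerivWithinAt_nonpos (convex_Ici 0)
      (fun t _ => (hψ t).continuousAt.continuousWithinAt)
      (fun t _ => (hψ t).hasDerivWithinAt) hψ'_nonpos
  have hψ01 := hanti self_mem_Ici (mem_Ici.2 zero_le_one) zero_le_one
  simp only [ψ] at hψ01
  norm_num at hψ01
  linarith

lemma update_add_le_of_coord_lipschitz {ι : Type*} [DecidableEq ι] {f : (ι → ℝ) → ℝ}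
    {grad : (ι → ℝ) → ι → ℝ}
    (hderiv : ∀ x k, HasDerivAt (fun r => f (update x k r)) (grad x k) (x k))
    {L : ℝ} (x : ι → ℝ) (k : ι)
    (hlip : ∀ r, |grad (update x k (x k + r)) k - grad x k| ≤ L * |r|) (d : ℝ) :
    f (update x k (x k + d)) ≤ f x + grad x k * d + L / 2 * d ^ 2 := by
  have hφ : ∀ s, HasDerivAt (fun r => f (update x k r)) (grad (update x k s) k) s := by
    intro s
    simpa using hderiv (update x k s) k
  simpa using image_add_le_of_deriv_lipschitz hφ (a := x k) (by simpa using hlip) d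

/-- The objective of the proximal coordinate step; `Ŵ_j(g, x) = -min_d proxObjective g Γ Ψ_j x d`. -/
noncomputable def proxObjective (g Γ : ℝ) (Ψ : ℝ → ℝ) (x d : ℝ) : ℝ :=
  g * d + Γ * d ^ 2 / 2 + Ψ (x + d) - Ψ x

lemma proxObjective_le_of_isMinOn {g Γ x d : ℝ} {Ψ : ℝ → ℝ} (hΨ : ConvexOn ℝ univ Ψ)
    (hmin : IsMinOn (proxObjective g Γ Ψ x) univ d) :
    proxObjective g Γ Ψ x d ≤ -(Γ / 2 * d ^ 2) := by
  -- compare `d` with the shrunken step `(1 - t) d` and let `t → 0⁺`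
  have hshrink : ∀ t ∈ Ioc (0 : ℝ) 1,
      proxObjective g Γ Ψ x d + Γ / 2 * d ^ 2 ≤ Γ / 2 * d ^ 2 * t := by
    rintro t ⟨ht0, ht1⟩
    have hconv :=
      hΨ.2 (mem_univ (x + d)) (mem_univ x) (sub_nonneg.2 ht1) ht0.le (sub_add_cancel 1 t)
    have hcmp := isMinOn_univ_iff.1 hmin ((1 - t) * d)
    simp only [smul_eq_mul, proxObjective] at hconv hcmp ⊢
    rw [show (1 - t) * (x + d) + t * x = x + (1 - t) * d by ring] at hconv
    refine le_of_mul_le_mul_left ?_ ht0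
    linarith
  have hlim : Tendsto (fun t : ℝ => Γ / 2 * d ^ 2 * t) (𝓝[>] 0) (𝓝 0) :=
    ((continuous_const_mul _).tendsto' 0 0 (mul_zero _)).mono_left nhdsWithin_le_nhds
  have := ge_of_tendsto hlim (eventually_of_mem (Ioc_mem_nhdsGT one_pos) hshrink)
  linarith

lemma mul_le_quarter_mul_sq_add_inv_mul_sq {Γ : ℝ} (hΓ : 0 < Γ) (a b : ℝ) :
    a * b ≤ Γ / 4 * b ^ 2 + 1 / Γ * a ^ 2 := by
  have hsq : Γ / 4 * b ^ 2 + 1 / Γ * a ^ 2 - a * b = (Γ * b - 2 * a) ^ 2 / (4 * Γ) := by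
    field_simp
    ring
  have : 0 ≤ (Γ * b - 2 * a) ^ 2 / (4 * Γ) := by positivity
  linarith

lemma sum_apply_sub_sum_apply_update {ι : Type*} [Fintype ι] [DecidableEq ι]
    (Ψ : ι → ℝ → ℝ) (x : ι → ℝ) (j : ι) (v : ℝ) :
    ∑ k, Ψ k (x k) - ∑ k, Ψ k (update x j v k) = Ψ j (x j) - Ψ j v := by
  rw [← Finset.sum_sub_distrib, Fintype.sum_eq_single j fun k hk => by simp [update_of_ne hk]]
  simp

theorem progress_quadratic_general
    {n : ℕ} (f : (Fin n → ℝ) → ℝ)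
    (Ψ : Fin n → ℝ → ℝ) (hΨ : ∀ k, ConvexOn ℝ Set.univ (Ψ k))
    (grad : (Fin n → ℝ) → Fin n → ℝ)
    (hderiv : ∀ (x : Fin n → ℝ) (k : Fin n),
      HasDerivAt (fun r => f (Function.update x k r)) (grad x k) (x k))
    (L : Fin n → ℝ) (Γ : ℝ) (hΓpos : 0 < Γ) (hΓ : ∀ k, L k ≤ Γ)
    (hLip : ∀ (x : Fin n → ℝ) (k : Fin n) (r : ℝ),
      |grad (Function.update x k (x k + r)) k - grad x k| ≤ L k * |r|)
    (j : Fin n) (xt : Fin n → ℝ) (gtil dtil : ℝ)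
    (hdtil : ∀ d : ℝ,
      gtil * dtil + Γ * dtil ^ 2 / 2 + Ψ j (xt j + dtil) - Ψ j (xt j)
        ≤ gtil * d + Γ * d ^ 2 / 2 + Ψ j (xt j + d) - Ψ j (xt j)) :
    (f xt + ∑ k, Ψ k (xt k))
      - (f (Function.update xt j (xt j + dtil))
          + ∑ k, Ψ k (Function.update xt j (xt j + dtil) k))
      ≥ Γ / 4 * dtil ^ 2 - 1 / Γ * (grad xt j - gtil) ^ 2 := by
  have hdescent := update_add_le_of_coord_lipschitz hderiv xt j (hLip xt j) dtil
  have hLΓ : L j / 2 * dtil ^ 2 ≤ Γ / 2 * dtil ^ 2 := by gcongr; exact hΓ j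
  have hprox := proxObjective_le_of_isMinOn (g := gtil) (Γ := Γ) (x := xt j) (hΨ j)
    (isMinOn_univ_iff.2 hdtil)
  have hsum := sum_apply_sub_sum_apply_update Ψ xt j (xt j + dtil)
  have hyoung := mul_le_quarter_mul_sq_add_inv_mul_sq hΓpos (grad xt j - gtil) dtil
  unfold proxObjective at hprox
  linarith

/-- First progress inequality with an inexact gradient (Lemma on discrete improvement
of `F`, first half): if `Γ ≥ L_k` for every coordinate Lipschitz constant `L_k` of the
convex differentiable function `f`, each `Ψ_k` is convex, `F = f + Σ_k Ψ_k`, and the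
coordinate-`j` update `d̃_j` is the proximal step computed from the inexact gradient
`g̃_j`, then `F(xᵗ) − F(xᵗ⁺¹) ≥ (Γ/4) d̃_j² − (1/Γ)(g_j − g̃_j)²`. -/
theorem progress_quadratic
    {n : ℕ} (f : (Fin n → ℝ) → ℝ) (hf : ConvexOn ℝ Set.univ f)
    (Ψ : Fin n → ℝ → ℝ) (hΨ : ∀ k, ConvexOn ℝ Set.univ (Ψ k))
    (grad : (Fin n → ℝ) → Fin n → ℝ)
    (hderiv : ∀ (x : Fin n → ℝ) (k : Fin n),
      HasDerivAt (fun r => f (Function.update x k r)) (grad x k) (x k))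
    (L : Fin n → ℝ) (Γ : ℝ) (hΓpos : 0 < Γ) (hΓ : ∀ k, L k ≤ Γ)
    (hLip : ∀ (x : Fin n → ℝ) (k : Fin n) (r : ℝ),
      |grad (Function.update x k (x k + r)) k - grad x k| ≤ L k * |r|)
    (j : Fin n) (xt : Fin n → ℝ) (gtil dtil : ℝ)
    (hdtil : ∀ d : ℝ,
      gtil * dtil + Γ * dtil ^ 2 / 2 + Ψ j (xt j + dtil) - Ψ j (xt j)
        ≤ gtil * d + Γ * d ^ 2 / 2 + Ψ j (xt j + d) - Ψ j (xt j)) :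
    (f xt + ∑ k, Ψ k (xt k))
      - (f (Function.update xt j (xt j + dtil))
          + ∑ k, Ψ k (Function.update xt j (xt j + dtil) k))
      ≥ Γ / 4 * dtil ^ 2 - 1 / Γ * (grad xt j - gtil) ^ 2 :=
  progress_quadratic_general f Ψ hΨ grad hderiv L Γ hΓpos hΓ hLip j xt gtil dtil hdtil
end

section
/- Under the same setup (f convex with coordinate smoothness constants L_k ≤ Γ, Ψ_k convex, F = f + Σ Ψ_k, update x^{t+1} = x^t + d̃_j·e_j where d̃_j = argmin_d { g̃_j·d + Γd²/2 + Ψ_j(x_j^t + d) − Ψ_j(x_j^t) }, g_j = ∇_j f(x^t) the true gradient): F(x^t) − F(x^{t+1}) ≥ Ŵ_j(g_j, x_j^t) − (1/Γ)·(g_j − g̃_j)², where Ŵ_j(g, x) = −min_d { g·d + Γd²/2 + Ψ_j(x + d) − Ψ_j(x) }. -/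
/-- Descent lemma via integration of the derivative. -/
lemma descent_lemma (ψ G : ℝ → ℝ) (hd : ∀ s, HasDerivAt ψ (G s) s)
    (L : ℝ) (hLip : ∀ s r, |G (s + r) - G s| ≤ L * |r|) (a r : ℝ) :
    ψ (a + r) ≤ ψ a + G a * r + L * r ^ 2 / 2 := by
  have hGcont : Continuous G := by
    have : LipschitzWith (Real.toNNReal L) G := by
      apply LipschitzWith.of_dist_le_mul
      intro x y
      have h := hLip y (x - y)
      rw [add_sub_cancel] at h
      rw [Real.dist_eq, Real.dist_eq]
      calc |G x - G y| ≤ L * |x - y| := h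
        _ ≤ (Real.toNNReal L : ℝ) * |x - y| := by
            gcongr; exact Real.le_coe_toNNReal L
    exact this.continuous
  have hint : IntervalIntegrable G MeasureTheory.volume a (a + r) :=
    (hGcont.intervalIntegrable _ _)
  have key : ∫ x in a..(a + r), G x = ψ (a + r) - ψ a :=
    intervalIntegral.integral_eq_sub_of_hasDerivAt (fun x _ => hd x) hint
  have hsub : ∫ x in a..(a + r), (G x - G a) = (ψ (a + r) - ψ a) - G a * r := by
    rw [intervalIntegral.integral_sub hint (intervalIntegrable_const)]
    rw [key, intervalIntegral.integral_const, smul_eq_mul]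
    ring
  have hlin : ∀ b c : ℝ, ∫ x in b..c, (x - a) = ((c - a) ^ 2 - (b - a) ^ 2) / 2 := by
    intro b c
    rw [intervalIntegral.integral_comp_sub_right (fun x => x) a, integral_id]
  have hbound : ∫ x in a..(a + r), (G x - G a) ≤ L * r ^ 2 / 2 := by
    rcases le_or_gt 0 r with hr | hr
    · have hmono : ∫ x in a..(a + r), (G x - G a)
          ≤ ∫ x in a..(a + r), L * (x - a) := by
        apply intervalIntegral.integral_mono_on (by linarith)
        · exact (hGcont.sub continuous_const).intervalIntegrable _ _
        · exact ((continuous_const.mul (continuous_id.sub continuous_const)).intervalIntegrable _ _)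
        · intro x hx
          rcases hx with ⟨hx1, hx2⟩
          have h := hLip a (x - a)
          rw [add_sub_cancel] at h
          have : |x - a| = x - a := abs_of_nonneg (by linarith)
          rw [this] at h
          exact le_trans (le_abs_self _) h
      calc ∫ x in a..(a + r), (G x - G a) ≤ ∫ x in a..(a + r), L * (x - a) := hmono
        _ = L * r ^ 2 / 2 := by
            rw [intervalIntegral.integral_const_mul, hlin]; ring
    · rw [intervalIntegral.integral_symm]
      have hmono : ∫ x in (a + r)..a, L * (x - a)
          ≤ ∫ x in (a + r)..a, (G x - G a) := by
        apply intervalIntegral.integral_mono_on (by linarith)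
        · exact ((continuous_const.mul (continuous_id.sub continuous_const)).intervalIntegrable _ _)
        · exact (hGcont.sub continuous_const).intervalIntegrable _ _
        · intro x hx
          rcases hx with ⟨hx1, hx2⟩
          have h := hLip a (x - a)
          rw [add_sub_cancel] at h
          have habs : |x - a| = -(x - a) := abs_of_nonpos (by linarith)
          rw [habs] at h
          have := neg_le_of_abs_le h
          linarith
      have hval : ∫ x in (a + r)..a, L * (x - a) = - (L * r ^ 2 / 2) := by
        rw [intervalIntegral.integral_const_mul, hlin]; ring
      linarith
  linarith [hsub ▸ hbound]

/-- A minimizer of convex + (Γ/2)·square is a strong minimizer. -/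
lemma strong_min (C : ℝ → ℝ)
    (hC : ∀ x y t : ℝ, 0 ≤ t → t ≤ 1 → C ((1 - t) * x + t * y) ≤ (1 - t) * C x + t * C y)
    (Γ : ℝ) (hΓ : 0 < Γ) (dm : ℝ)
    (hmin : ∀ d, C dm + Γ * dm ^ 2 / 2 ≤ C d + Γ * d ^ 2 / 2) (d : ℝ) :
    C dm + Γ * dm ^ 2 / 2 + Γ / 2 * (d - dm) ^ 2 ≤ C d + Γ * d ^ 2 / 2 := by
  by_cases hdd : d = dm
  · subst hdd; simp
  apply le_of_forall_pos_le_add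
  intro ε hε
  set q : ℝ := Γ / 2 * (d - dm) ^ 2 with hqdef
  have hq : 0 < q := by
    have h0 : d - dm ≠ 0 := sub_ne_zero.mpr hdd
    positivity
  set t : ℝ := min (1 / 2) (ε / q) with htdef
  have ht0 : 0 < t := lt_min (by norm_num) (div_pos hε hq)
  have ht1 : t ≤ 1 := le_trans (min_le_left _ _) (by norm_num)
  have hconv := hC dm d t ht0.le ht1
  have hm := hmin ((1 - t) * dm + t * d)
  have hid : Γ * ((1 - t) * dm + t * d) ^ 2 / 2
      = (1 - t) * (Γ * dm ^ 2 / 2) + t * (Γ * d ^ 2 / 2) - t * (1 - t) * q := by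
    rw [hqdef]; ring
  have key : t * (C dm + Γ * dm ^ 2 / 2 + (1 - t) * q) ≤ t * (C d + Γ * d ^ 2 / 2) := by
    nlinarith [hconv, hm, hid]
  have key2 : C dm + Γ * dm ^ 2 / 2 + (1 - t) * q ≤ C d + Γ * d ^ 2 / 2 :=
    le_of_mul_le_mul_left (by linarith) ht0
  have htq : t * q ≤ ε := by
    have : t ≤ ε / q := min_le_right _ _
    calc t * q ≤ (ε / q) * q := by gcongr
      _ = ε := by field_simp
  linarith


/-- Second progress inequality with an inexact gradient (Lemma on discrete improvement
of `F`, second half): under the same setup, with `d_j` the exact proximal step for the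
true gradient `g_j = ∇_j f(xᵗ)` (so `Ŵ_j(g_j, x_jᵗ)` equals minus the objective at `d_j`),
`F(xᵗ) − F(xᵗ⁺¹) ≥ Ŵ_j(g_j, x_jᵗ) − (1/Γ)(g_j − g̃_j)²`. -/
theorem progress_What
    {n : ℕ} (f : (Fin n → ℝ) → ℝ) (hf : ConvexOn ℝ Set.univ f)
    (Ψ : Fin n → ℝ → ℝ) (hΨ : ∀ k, ConvexOn ℝ Set.univ (Ψ k))
    (grad : (Fin n → ℝ) → Fin n → ℝ)
    (hderiv : ∀ (x : Fin n → ℝ) (k : Fin n),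
      HasDerivAt (fun r => f (Function.update x k r)) (grad x k) (x k))
    (L : Fin n → ℝ) (Γ : ℝ) (hΓpos : 0 < Γ) (hΓ : ∀ k, L k ≤ Γ)
    (hLip : ∀ (x : Fin n → ℝ) (k : Fin n) (r : ℝ),
      |grad (Function.update x k (x k + r)) k - grad x k| ≤ L k * |r|)
    (j : Fin n) (xt : Fin n → ℝ) (gtil dtil dj : ℝ)
    (hdtil : ∀ d : ℝ,
      gtil * dtil + Γ * dtil ^ 2 / 2 + Ψ j (xt j + dtil) - Ψ j (xt j)
        ≤ gtil * d + Γ * d ^ 2 / 2 + Ψ j (xt j + d) - Ψ j (xt j))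
    (hdj : ∀ d : ℝ,
      grad xt j * dj + Γ * dj ^ 2 / 2 + Ψ j (xt j + dj) - Ψ j (xt j)
        ≤ grad xt j * d + Γ * d ^ 2 / 2 + Ψ j (xt j + d) - Ψ j (xt j)) :
    (f xt + ∑ k, Ψ k (xt k))
      - (f (Function.update xt j (xt j + dtil))
          + ∑ k, Ψ k (Function.update xt j (xt j + dtil) k))
      ≥ -(grad xt j * dj + Γ * dj ^ 2 / 2 + Ψ j (xt j + dj) - Ψ j (xt j))
        - 1 / Γ * (grad xt j - gtil) ^ 2 := by
  classical
  -- notation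
  have hψd : ∀ s : ℝ, HasDerivAt (fun r => f (Function.update xt j r))
      (grad (Function.update xt j s) j) s := by
    intro s
    have h := hderiv (Function.update xt j s) j
    simpa only [Function.update_idem, Function.update_self] using h
  have hG : ∀ s r : ℝ,
      |grad (Function.update xt j (s + r)) j - grad (Function.update xt j s) j|
        ≤ L j * |r| := by
    intro s r
    have h := hLip (Function.update xt j s) j r
    simpa only [Function.update_idem, Function.update_self] using h
  -- descent lemma along coordinate j
  have hdesc := descent_lemma (fun s => f (Function.update xt j s))
      (fun s => grad (Function.update xt j s) j) hψd (L j) hG (xt j) dtil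
  rw [Function.update_eq_self] at hdesc
  -- sum over Ψ
  have h1 : ∑ k, Ψ k (Function.update xt j (xt j + dtil) k) - ∑ k, Ψ k (xt k)
      = Ψ j (xt j + dtil) - Ψ j (xt j) := by
    rw [← Finset.sum_sub_distrib, Finset.sum_eq_single j]
    · simp
    · intro k _ hk; simp [Function.update_of_ne hk]
    · simp
  -- convexity of the shifted Ψ objective
  have hΨc : ∀ x y t : ℝ, 0 ≤ t → t ≤ 1 →
      Ψ j ((1 - t) * x + t * y) ≤ (1 - t) * Ψ j x + t * Ψ j y := by
    intro x y t ht0 ht1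
    have h := (hΨ j).2 (Set.mem_univ x) (Set.mem_univ y)
      (by linarith : (0:ℝ) ≤ 1 - t) ht0 (by ring)
    simpa [smul_eq_mul] using h
  have hCconv : ∀ g0 : ℝ, ∀ x y t : ℝ, 0 ≤ t → t ≤ 1 →
      (fun d => g0 * d + Ψ j (xt j + d) - Ψ j (xt j)) ((1 - t) * x + t * y)
        ≤ (1 - t) * (fun d => g0 * d + Ψ j (xt j + d) - Ψ j (xt j)) x
          + t * (fun d => g0 * d + Ψ j (xt j + d) - Ψ j (xt j)) y := by
    intro g0 x y t ht0 ht1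
    have h := hΨc (xt j + x) (xt j + y) t ht0 ht1
    have he : (1 - t) * (xt j + x) + t * (xt j + y)
        = xt j + ((1 - t) * x + t * y) := by ring
    rw [he] at h
    dsimp only
    nlinarith [h]
  -- strong minimality of dtil (for gtil) and dj (for g)
  have hmin1 : ∀ d, (fun d => gtil * d + Ψ j (xt j + d) - Ψ j (xt j)) dtil
      + Γ * dtil ^ 2 / 2 ≤ (fun d => gtil * d + Ψ j (xt j + d) - Ψ j (xt j)) d
      + Γ * d ^ 2 / 2 := by
    intro d; have := hdtil d; dsimp only; linarith
  have hmin2 : ∀ d, (fun d => grad xt j * d + Ψ j (xt j + d) - Ψ j (xt j)) dj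
      + Γ * dj ^ 2 / 2 ≤ (fun d => grad xt j * d + Ψ j (xt j + d) - Ψ j (xt j)) d
      + Γ * d ^ 2 / 2 := by
    intro d; have := hdj d; dsimp only; linarith
  have hs1 := strong_min (fun d => gtil * d + Ψ j (xt j + d) - Ψ j (xt j)) (hCconv gtil) Γ hΓpos dtil hmin1 dj
  have hs2 := strong_min (fun d => grad xt j * d + Ψ j (xt j + d) - Ψ j (xt j)) (hCconv (grad xt j)) Γ hΓpos dj hmin2 dtil
  -- gap between minimizers
  have hgap : Γ * (dtil - dj) ^ 2 ≤ (grad xt j - gtil) * (dtil - dj) := by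
    nlinarith [hs1, hs2]
  have hfin : (grad xt j - gtil) * (dtil - dj) ≤ (grad xt j - gtil) ^ 2 / Γ := by
    rw [le_div_iff₀ hΓpos]
    nlinarith [hgap, sq_nonneg ((grad xt j - gtil) - Γ * (dtil - dj)),
      mul_le_mul_of_nonneg_left hgap hΓpos.le]
  have hLΓ : 0 ≤ (Γ - L j) * dtil ^ 2 :=
    mul_nonneg (sub_nonneg.mpr (hΓ j)) (sq_nonneg dtil)
  have hopt := hdtil dj
  have hgoal : 1 / Γ * (grad xt j - gtil) ^ 2 = (grad xt j - gtil) ^ 2 / Γ := by ring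
  rw [ge_iff_le, hgoal]
  nlinarith [hdesc, h1, hopt, hfin, hLΓ]
end

section
/- Combining the two progress inequalities: under the same setup (Γ ≥ L_max, update with inexact gradient g̃_{k_t} at coordinate k_t with increment Δx_{k_t}^t), F(x^t) − F(x^{t+1}) ≥ (1/2)·Ŵ_{k_t}(g_{k_t}^t, x_{k_t}^t) + (Γ/8)·(Δx_{k_t}^t)² − (1/Γ)·(g_{k_t}^t − g̃_{k_t}^t)². -/
/-!
The descent lemma along coordinate `j` gives
`F(xᵗ) - F(xᵗ⁺¹) ≥ -(g Δ + Γ Δ²/2 + Ψ_j(x + Δ) - Ψ_j(x))`, where `Δ` is the step taken.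
Since `Δ` minimises the model `m(d) = g̃ d + Γ d²/2 + Ψ_j(x + d)`, which is `Γ`-strongly convex,
`m(Δ) + Γ/2 (d - Δ)² ≤ m(d)` for every `d`. Comparing with `d = 0` bounds the progress below by
`Γ/2 Δ² - (g - g̃) Δ`, and comparing with `d = d_j` by `Ŵ_j + Γ/2 (Δ - d_j)² - (g - g̃)(Δ - d_j)`;
Young's inequality `ab ≤ a²/Γ + Γ b²/4` turns these into the two progress inequalities, whose
average is the claim.
-/

open Filter Topology Set

lemma nonneg_of_forall_mul_add_mul_sq_nonneg {A c : ℝ}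
    (h : ∀ t : ℝ, 0 < t → t ≤ 1 → 0 ≤ t * A + c * t ^ 2) : 0 ≤ A := by
  have hlim : Tendsto (fun t : ℝ => A + c * t) (𝓝[>] 0) (𝓝 A) := by
    have : Continuous fun t : ℝ => A + c * t := by fun_prop
    simpa using (this.tendsto 0).mono_left nhdsWithin_le_nhds
  refine ge_of_tendsto hlim ?_
  filter_upwards [Ioc_mem_nhdsGT zero_lt_one] with t ⟨ht0, ht1⟩
  have := h t ht0 ht1
  nlinarith

lemma ConvexOn.quadratic_growth_of_isMinOn_add_sq {φ : ℝ → ℝ} (hφ : ConvexOn ℝ univ φ)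
    {Γ d₀ : ℝ}
    (hmin : IsMinOn (fun d => φ d + Γ / 2 * d ^ 2) univ d₀) (d : ℝ) :
    φ d₀ + Γ / 2 * d₀ ^ 2 + Γ / 2 * (d - d₀) ^ 2 ≤ φ d + Γ / 2 * d ^ 2 := by
  have hslope : 0 ≤ φ d - φ d₀ + Γ * d₀ * (d - d₀) := by
    refine nonneg_of_forall_mul_add_mul_sq_nonneg (c := Γ / 2 * (d - d₀) ^ 2) fun t ht0 ht1 => ?_
    have hconv := hφ.2 (mem_univ d₀) (mem_univ d) (sub_nonneg.2 ht1) ht0.le (by ring)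
    have hle := isMinOn_univ_iff.1 hmin (d₀ + t * (d - d₀))
    have hpt : (1 - t) • d₀ + t • d = d₀ + t * (d - d₀) := by simp only [smul_eq_mul]; ring
    rw [hpt, smul_eq_mul, smul_eq_mul] at hconv
    nlinarith
  nlinarith

lemma image_add_le_of_hasDerivAt_of_abs_sub_le {ψ G : ℝ → ℝ} {x L : ℝ}
    (hψ : ∀ s, HasDerivAt ψ (G s) s) (hG : ∀ r, |G (x + r) - G x| ≤ L * |r|) (d : ℝ) :
    ψ (x + d) ≤ ψ x + G x * d + L / 2 * d ^ 2 := by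
  set m : ℝ → ℝ := fun s => ψ (x + s * d) - s * d * G x - L / 2 * s ^ 2 * d ^ 2
  have hm : ∀ s, HasDerivAt m (d * G (x + s * d) - d * G x - L * s * d ^ 2) s := by
    intro s
    have h1 : HasDerivAt (fun s => ψ (x + s * d)) (G (x + s * d) * d) s :=
      (hψ (x + s * d)).comp s ((hasDerivAt_mul_const d).const_add x)
    exact ((h1.sub ((hasDerivAt_mul_const d).mul_const (G x))).sub
      (((hasDerivAt_pow 2 s).const_mul (L / 2)).mul_const (d ^ 2))).congr_deriv (by ring)
  have hanti : AntitoneOn m (Icc 0 1) := by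
    refine antitoneOn_of_deriv_nonpos (convex_Icc 0 1)
      (fun s _ => (hm s).continuousAt.continuousWithinAt)
      (fun s _ => (hm s).differentiableAt.differentiableWithinAt) fun s hs => ?_
    rw [interior_Icc] at hs
    rw [(hm s).deriv]
    have hlip := hG (s * d)
    calc d * G (x + s * d) - d * G x - L * s * d ^ 2
        ≤ |d| * |G (x + s * d) - G x| - L * s * d ^ 2 := by
          rw [← abs_mul, mul_sub]; linarith [le_abs_self (d * G (x + s * d) - d * G x)]
      _ ≤ |d| * (L * |s * d|) - L * s * d ^ 2 := by gcongr
      _ = 0 := by rw [abs_mul, abs_of_pos hs.1, ← sq_abs d]; ring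
  have := hanti (left_mem_Icc.2 zero_le_one) (right_mem_Icc.2 zero_le_one) zero_le_one
  simp only [m, one_mul, one_pow, zero_mul, mul_zero, add_zero, sub_zero,
    zero_pow two_ne_zero] at this
  linarith

lemma Finset.sum_apply_update_univ {ι M : Type*} [Fintype ι] [DecidableEq ι] [AddCommGroup M]
    {α : ι → Type*} (Ψ : ∀ i, α i → M) (x : ∀ i, α i) (j : ι) (v : α j) :
    ∑ k, Ψ k (Function.update x j v k) = ∑ k, Ψ k (x k) - Ψ j (x j) + Ψ j v := by
  simp only [Function.apply_update Ψ, Finset.sum_update_of_mem (Finset.mem_univ j),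
    Finset.sum_eq_sum_sdiff_singleton_add (Finset.mem_univ j) (fun k => Ψ k (x k))]
  abel

lemma mul_le_inv_mul_sq_add_mul_sq {Γ : ℝ} (hΓ : 0 < Γ) (a b : ℝ) :
    a * b ≤ 1 / Γ * a ^ 2 + Γ / 4 * b ^ 2 := by
  have h : 1 / Γ * a ^ 2 + Γ / 4 * b ^ 2 - a * b = 1 / Γ * (a - Γ * b / 2) ^ 2 := by
    field_simp; ring
  rw [← sub_nonneg, h]
  positivity

lemma coordinate_descent_bound {ι : Type*} [DecidableEq ι] {f : (ι → ℝ) → ℝ}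
    {grad : (ι → ℝ) → ι → ℝ}
    (hderiv : ∀ x k, HasDerivAt (fun r => f (Function.update x k r)) (grad x k) (x k))
    {L : ℝ} {x : ι → ℝ} {j : ι}
    (hLip : ∀ r, |grad (Function.update x j (x j + r)) j - grad x j| ≤ L * |r|) (d : ℝ) :
    f (Function.update x j (x j + d)) ≤ f x + grad x j * d + L / 2 * d ^ 2 := by
  have hline : ∀ s, HasDerivAt (fun r => f (Function.update x j r))
      (grad (Function.update x j s) j) s := by
    intro s
    simpa only [Function.update_idem, Function.update_self] using
      hderiv (Function.update x j s) j
  have := image_add_le_of_hasDerivAt_of_abs_sub_le (x := x j) (L := L) hline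
    (by simpa only [Function.update_eq_self] using hLip) d
  simpa only [Function.update_eq_self] using this

theorem progress_combined_general
    {n : ℕ} (f : (Fin n → ℝ) → ℝ)
    (Ψ : Fin n → ℝ → ℝ) (hΨ : ∀ k, ConvexOn ℝ Set.univ (Ψ k))
    (grad : (Fin n → ℝ) → Fin n → ℝ)
    (hderiv : ∀ (x : Fin n → ℝ) (k : Fin n),
      HasDerivAt (fun r => f (Function.update x k r)) (grad x k) (x k))
    (L : Fin n → ℝ) (Γ : ℝ) (hΓpos : 0 < Γ) (hΓ : ∀ k, L k ≤ Γ)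
    (hLip : ∀ (x : Fin n → ℝ) (k : Fin n) (r : ℝ),
      |grad (Function.update x k (x k + r)) k - grad x k| ≤ L k * |r|)
    (j : Fin n) (xt : Fin n → ℝ) (gtil dtil dj : ℝ)
    (hdtil : ∀ d : ℝ,
      gtil * dtil + Γ * dtil ^ 2 / 2 + Ψ j (xt j + dtil) - Ψ j (xt j)
        ≤ gtil * d + Γ * d ^ 2 / 2 + Ψ j (xt j + d) - Ψ j (xt j)) :
    (f xt + ∑ k, Ψ k (xt k))
      - (f (Function.update xt j (xt j + dtil))
          + ∑ k, Ψ k (Function.update xt j (xt j + dtil) k))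
      ≥ 1 / 2 * -(grad xt j * dj + Γ * dj ^ 2 / 2 + Ψ j (xt j + dj) - Ψ j (xt j))
        + Γ / 8 * dtil ^ 2 - 1 / Γ * (grad xt j - gtil) ^ 2 := by
  have hdescent : f (Function.update xt j (xt j + dtil))
      ≤ f xt + grad xt j * dtil + Γ / 2 * dtil ^ 2 :=
    (coordinate_descent_bound hderiv (hLip xt j) dtil).trans <| by
      gcongr; exact hΓ j
  have hmodel : ConvexOn ℝ univ fun d => gtil * d + Ψ j (xt j + d) :=
    ((LinearMap.mul ℝ ℝ gtil).convexOn convex_univ).add ((hΨ j).translate_right (xt j))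
  have hprox := hmodel.quadratic_growth_of_isMinOn_add_sq (Γ := Γ) (d₀ := dtil)
    (isMinOn_univ_iff.2 fun d => by linarith [hdtil d])
  have hprox₀ := hprox 0
  have hproxj := hprox dj
  simp only [add_zero, mul_zero, zero_sub, neg_sq, zero_pow two_ne_zero] at hprox₀
  have hquad : Γ / 4 * dtil ^ 2 - 1 / Γ * (grad xt j - gtil) ^ 2
      ≤ f xt - f (Function.update xt j (xt j + dtil)) + Ψ j (xt j) - Ψ j (xt j + dtil) := by
    linear_combination hdescent + hprox₀
      + mul_le_inv_mul_sq_add_mul_sq hΓpos (grad xt j - gtil) dtil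
  have hgap : -(grad xt j * dj + Γ * dj ^ 2 / 2 + Ψ j (xt j + dj) - Ψ j (xt j))
        - 1 / Γ * (grad xt j - gtil) ^ 2
      ≤ f xt - f (Function.update xt j (xt j + dtil)) + Ψ j (xt j) - Ψ j (xt j + dtil) := by
    linear_combination hdescent + hproxj
      + mul_le_inv_mul_sq_add_mul_sq hΓpos (grad xt j - gtil) (dtil - dj)
      + mul_nonneg (by positivity : (0 : ℝ) ≤ Γ / 4) (sq_nonneg (dtil - dj))
  rw [Finset.sum_apply_update_univ]
  linarith

/-- Combined progress inequality (average of the two halves of the discrete improvement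
lemma): `F(xᵗ) − F(xᵗ⁺¹) ≥ (1/2) Ŵ_{k_t}(g,x) + (Γ/8)(Δx)² − (1/Γ)(g − g̃)²`. -/
theorem progress_combined
    {n : ℕ} (f : (Fin n → ℝ) → ℝ) (hf : ConvexOn ℝ Set.univ f)
    (Ψ : Fin n → ℝ → ℝ) (hΨ : ∀ k, ConvexOn ℝ Set.univ (Ψ k))
    (grad : (Fin n → ℝ) → Fin n → ℝ)
    (hderiv : ∀ (x : Fin n → ℝ) (k : Fin n),
      HasDerivAt (fun r => f (Function.update x k r)) (grad x k) (x k))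
    (L : Fin n → ℝ) (Γ : ℝ) (hΓpos : 0 < Γ) (hΓ : ∀ k, L k ≤ Γ)
    (hLip : ∀ (x : Fin n → ℝ) (k : Fin n) (r : ℝ),
      |grad (Function.update x k (x k + r)) k - grad x k| ≤ L k * |r|)
    (j : Fin n) (xt : Fin n → ℝ) (gtil dtil dj : ℝ)
    (hdtil : ∀ d : ℝ,
      gtil * dtil + Γ * dtil ^ 2 / 2 + Ψ j (xt j + dtil) - Ψ j (xt j)
        ≤ gtil * d + Γ * d ^ 2 / 2 + Ψ j (xt j + d) - Ψ j (xt j))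
    (hdj : ∀ d : ℝ,
      grad xt j * dj + Γ * dj ^ 2 / 2 + Ψ j (xt j + dj) - Ψ j (xt j)
        ≤ grad xt j * d + Γ * d ^ 2 / 2 + Ψ j (xt j + d) - Ψ j (xt j)) :
    (f xt + ∑ k, Ψ k (xt k))
      - (f (Function.update xt j (xt j + dtil))
          + ∑ k, Ψ k (Function.update xt j (xt j + dtil) k))
      ≥ 1 / 2 * -(grad xt j * dj + Γ * dj ^ 2 / 2 + Ψ j (xt j + dj) - Ψ j (xt j))
        + Γ / 8 * dtil ^ 2 - 1 / Γ * (grad xt j - gtil) ^ 2 :=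
  progress_combined_general f Ψ hΨ grad hderiv L Γ hΓpos hΓ hLip j xt gtil dtil dj hdtil
end

section
/- Meta convergence theorem (strongly convex case): Let F = f + Σ_k Ψ_k with Γ ≥ L_max, and suppose there are nonnegative functions A⁺(t), A⁻(t) with A⁺(1) = 0, H(t) := F(x^t) + A⁺(t) − A⁻(t), such that for constants α, β > 0 and all t ≥ 1: H(t) − H(t+1) ≥ (α/n)·Σ_{k=1}^n Ŵ_k(∇_k f(x^t), x_k^t) + (β/n)·A⁺(t). If F is strongly convex with parameter μ_F and f is strongly convex with parameter μ_f ≤ Γ, then for all T ≥ 0: H(T+1) ≤ [1 − min{ (α/(2n))·μ_F/(μ_F + Γ − μ_f), β/(2n) }]^T · F(x¹). -/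
/-!
Take a minimiser `x⋆` and `c = μ_F / (μ_F + Γ - μ_f)`. Since `dW` minimises each coordinate model,
`-Σ_k Ŵ_k(∇_k f(u), u_k)` is at most the model value of the step `c (x⋆ - u)`. Bounding that value
with strong convexity of `F` on the segment `[u, x⋆]` and the strong-convexity lower bound for `f`
at `u`, the quadratic terms cancel exactly for this `c`, leaving `Σ_k Ŵ_k ≥ c F(u)`. Fed into the
per-step inequality, and using `F(xᵗ) + A⁺(t) ≥ max (H t) 0`, this gives
`H t - H (t+1) ≥ 2ρ (F(xᵗ) + A⁺(t))` for the `ρ` of the statement, hence the linear rate.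
-/

open Set InnerProductSpace

lemma ConvexOn.apply_sub_le_of_hasFDerivAt {E : Type*} [NormedAddCommGroup E] [NormedSpace ℝ E]
    {g : E → ℝ} {g' : E →L[ℝ] ℝ} {x : E} (hg : ConvexOn ℝ univ g) (hd : HasFDerivAt g g' x)
    (y : E) : g' (y - x) ≤ g y - g x := by
  let ℓ : ℝ →ᵃ[ℝ] E := AffineMap.lineMap x y
  have hℓ : HasDerivAt ℓ (y - x) 0 := AffineMap.hasDerivAt_lineMap
  have hφ : HasDerivAt (g ∘ ℓ) (g' (y - x)) 0 :=
    (by simpa [ℓ] using hd : HasFDerivAt g g' (ℓ 0)).comp_hasDerivAt 0 hℓ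
  simpa [slope, ℓ] using
    (hg.comp_affineMap ℓ).le_slope_of_hasDerivAt (mem_univ 0) (mem_univ 1) one_pos hφ

lemma StrongConvexOn.add_inner_add_le_of_hasGradientAt {E : Type*} [NormedAddCommGroup E] [InnerProductSpace ℝ E]
    [CompleteSpace E] {f : E → ℝ} {μ : ℝ} {g x : E} (hf : StrongConvexOn univ μ f)
    (hg : HasGradientAt f g x) (y : E) :
    f x + inner ℝ g (y - x) + μ / 2 * ‖y - x‖ ^ 2 ≤ f y := by
  have hd := (hasGradientAt_iff_hasFDerivAt.mp hg).sub
    ((hasFDerivAt_id x).norm_sq.const_mul (μ / 2))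
  have := (strongConvexOn_iff_convex.mp hf).apply_sub_le_of_hasFDerivAt hd y
  simp only [id_eq, ContinuousLinearMap.comp_id, sub_apply, toDual_apply_apply, inner_sub_right,
    smul_apply, coe_innerSL_apply, inner_self_eq_norm_sq_to_K, Real.ringHom_apply, nsmul_eq_mul,
    Nat.cast_ofNat, smul_eq_mul, tsub_le_iff_right] at this
  rw [norm_sub_sq_real, inner_sub_right, real_inner_comm x y]
  linarith

-- The paper's `Ŵ_k(g, z)` is `-coordModel Γ (Ψ k) g z d` at a minimising step `d`.
noncomputable def coordModel (Γ : ℝ) (ψ : ℝ → ℝ) (g z d : ℝ) : ℝ :=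
  g * d + Γ * d ^ 2 / 2 + ψ (z + d) - ψ z

section Coordinates

variable {ι : Type*} [Fintype ι]

lemma sum_coordModel_eq (Γ : ℝ) (Ψ : ι → ℝ → ℝ) (g u e : EuclideanSpace ℝ ι) :
    ∑ k, coordModel Γ (Ψ k) (g k) (u k) (e k)
      = inner ℝ g e + Γ / 2 * ‖e‖ ^ 2 + ∑ k, Ψ k ((u + e) k) - ∑ k, Ψ k (u k) := by
  simp only [coordModel, Finset.sum_sub_distrib, Finset.sum_add_distrib, PiLp.inner_apply,
    EuclideanSpace.norm_sq_eq, Finset.mul_sum, PiLp.add_apply, RCLike.inner_apply,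
    conj_trivial, Real.norm_eq_abs, sq_abs]
  congr 2; congr 1 <;> exact Finset.sum_congr rfl fun k _ => by ring

lemma sum_coordModel_le_mul_sub {f F : EuclideanSpace ℝ ι → ℝ} {Ψ : ι → ℝ → ℝ}
    {Γ μF μf c : ℝ} {g u : EuclideanSpace ℝ ι} {d : ι → ℝ}
    (hFdef : ∀ v, F v = f v + ∑ k, Ψ k (v k))
    (hFsc : StrongConvexOn univ μF F) (hfsc : StrongConvexOn univ μf f) (hg : HasGradientAt f g u)
    (hd : ∀ k e, coordModel Γ (Ψ k) (g k) (u k) (d k) ≤ coordModel Γ (Ψ k) (g k) (u k) e)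
    (hc0 : 0 ≤ c) (hc1 : c ≤ 1) (hcμ : c * (μF + Γ - μf) ≤ μF) (y : EuclideanSpace ℝ ι) :
    ∑ k, coordModel Γ (Ψ k) (g k) (u k) (d k) ≤ c * (F y - F u) := by
  have hmin : ∑ k, coordModel Γ (Ψ k) (g k) (u k) (d k)
      ≤ ∑ k, coordModel Γ (Ψ k) (g k) (u k) ((c • (y - u)) k) :=
    Finset.sum_le_sum fun k _ => hd k _
  have hF : F (u + c • (y - u))
      ≤ (1 - c) * F u + c * F y - (1 - c) * c * (μF / 2 * ‖y - u‖ ^ 2) := by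
    have := hFsc.2 (mem_univ u) (mem_univ y) (by linarith : (0 : ℝ) ≤ 1 - c) hc0 (by ring)
    rwa [show (1 - c) • u + c • y = u + c • (y - u) by module, norm_sub_rev, smul_eq_mul,
      smul_eq_mul] at this
  have hf := hfsc.add_inner_add_le_of_hasGradientAt hg (u + c • (y - u))
  have hcurv : c * ‖y - u‖ ^ 2 * (c * (μF + Γ - μf) - μF) ≤ 0 :=
    mul_nonpos_of_nonneg_of_nonpos (by positivity) (by linarith)
  rw [sum_coordModel_eq Γ Ψ g u (c • (y - u))] at hmin
  simp only [add_sub_cancel_left, inner_smul_right, norm_smul, mul_pow, Real.norm_eq_abs,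
    sq_abs] at hmin hf
  linarith [hFdef u, hFdef (u + c • (y - u))]

end Coordinates

lemma le_one_sub_pow_mul_of_descent {h e : ℕ → ℝ} {ρ : ℝ} (hρ : 0 ≤ ρ)
    (hh : ∀ t ≥ 1, 0 ≤ h t) (hhe : ∀ t ≥ 1, h t ≤ e t)
    (hdesc : ∀ t ≥ 1, 2 * ρ * e t ≤ h t - h (t + 1)) (T : ℕ) :
    h (T + 1) ≤ (1 - ρ) ^ T * e 1 := by
  have hcontr : ∀ t ≥ 1, h (t + 1) ≤ (1 - ρ) * h t := fun t ht => by
    nlinarith [hdesc t ht, hhe t ht, hh t ht]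
  by_cases hρ1 : ρ ≤ 1
  · induction T with
    | zero => simpa using hhe 1 le_rfl
    | succ T ih =>
      calc h (T + 1 + 1) ≤ (1 - ρ) * h (T + 1) := hcontr _ (Nat.le_add_left 1 T)
        _ ≤ (1 - ρ) * ((1 - ρ) ^ T * e 1) := by gcongr
        _ = (1 - ρ) ^ (T + 1) * e 1 := by ring
  · -- `2ρ e 1 ≤ h 1 - h 2 ≤ e 1` with `2ρ > 1` forces `e 1 = 0`
    have he1 : e 1 = 0 := by
      nlinarith [hdesc 1 le_rfl, hh 1 le_rfl, hh 2 (by norm_num), hhe 1 le_rfl]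
    rw [he1, mul_zero]
    induction T with
    | zero => simpa [he1] using hhe 1 le_rfl
    | succ T ih =>
      have := hdesc (T + 1) (Nat.le_add_left 1 T)
      nlinarith [hh (T + 1) (Nat.le_add_left 1 T), hhe (T + 1) (Nat.le_add_left 1 T)]

theorem meta_convergence_strongly_convex_general
    {n : ℕ}
    (f F : EuclideanSpace ℝ (Fin n) → ℝ)
    (Ψ : Fin n → ℝ → ℝ)
    (hFdef : ∀ y, F y = f y + ∑ k, Ψ k (y k))
    (hFnonneg : ∀ y, 0 ≤ F y) (hFzero : ∃ y, F y = 0)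
    (gradf : EuclideanSpace ℝ (Fin n) → EuclideanSpace ℝ (Fin n))
    (hgrad : ∀ y, HasGradientAt f (gradf y) y)
    (Γ μF μf : ℝ) (hμfΓ : μf ≤ Γ)
    (hμF : 0 < μF)
    (hFsc : StrongConvexOn Set.univ μF F)
    (hfsc : StrongConvexOn Set.univ μf f)
    (dW : Fin n → ℝ → ℝ → ℝ)
    (hdW : ∀ (k : Fin n) (g z d : ℝ),
      g * dW k g z + Γ * (dW k g z) ^ 2 / 2 + Ψ k (z + dW k g z) - Ψ k z
        ≤ g * d + Γ * d ^ 2 / 2 + Ψ k (z + d) - Ψ k z)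
    (x : ℕ → EuclideanSpace ℝ (Fin n))
    (Ap Am : ℕ → ℝ) (hAp : ∀ t, 0 ≤ Ap t) (hAm : ∀ t, 0 ≤ Am t) (hAp1 : Ap 1 = 0)
    (H : ℕ → ℝ) (hHdef : ∀ t, H t = F (x t) + Ap t - Am t)
    (α β : ℝ) (hα : 0 < α) (hβ : 0 < β)
    (ha : ∀ t ≥ 1, 0 ≤ H t)
    (hc : ∀ t ≥ 1, H t - H (t + 1) ≥
      α / n * (∑ k,
        -(gradf (x t) k * dW k (gradf (x t) k) (x t k)
          + Γ * (dW k (gradf (x t) k) (x t k)) ^ 2 / 2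
          + Ψ k (x t k + dW k (gradf (x t) k) (x t k)) - Ψ k (x t k)))
      + β / n * Ap t) :
    ∀ T : ℕ, H (T + 1) ≤
      (1 - min (α / (2 * n) * (μF / (μF + Γ - μf))) (β / (2 * n))) ^ T * F (x 1) := by
  obtain ⟨xmin, hxmin⟩ := hFzero
  set c := μF / (μF + Γ - μf)
  have hc0 : 0 ≤ c := div_nonneg hμF.le (by linarith)
  have hc1 : c ≤ 1 := div_le_one_of_le₀ (by linarith) (by linarith)
  have hcμ : c * (μF + Γ - μf) = μF := div_mul_cancel₀ _ (by linarith)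
  have hW : ∀ u, c * F u ≤ ∑ k, -coordModel Γ (Ψ k) (gradf u k) (u k) (dW k (gradf u k) (u k)) :=
    fun u => by
      have := sum_coordModel_le_mul_sub hFdef hFsc hfsc (hgrad u) (fun k => hdW k _ _) hc0 hc1
        hcμ.le xmin
      rw [hxmin] at this
      rw [Finset.sum_neg_distrib]
      linarith
  set ρ := min (α / (2 * n) * c) (β / (2 * n))
  have hρ : 0 ≤ ρ := le_min (by positivity) (by positivity)
  have hdesc : ∀ t ≥ 1, 2 * ρ * (F (x t) + Ap t) ≤ H t - H (t + 1) := fun t ht => by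
    have hρF : 2 * ρ ≤ α / n * c := by
      have : ρ ≤ α / (2 * n) * c := min_le_left _ _
      linarith [show 2 * (α / (2 * n) * c) = α / n * c by ring]
    have hρA : 2 * ρ ≤ β / n := by
      have : ρ ≤ β / (2 * n) := min_le_right _ _
      linarith [show 2 * (β / (2 * n)) = β / n by ring]
    have hWt := mul_le_mul_of_nonneg_left (hW (x t)) (by positivity : (0 : ℝ) ≤ α / n)
    simp only [coordModel] at hWt
    nlinarith [mul_le_mul_of_nonneg_right hρF (hFnonneg (x t)),
      mul_le_mul_of_nonneg_right hρA (hAp t), hc t ht]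
  intro T
  simpa [hAp1] using le_one_sub_pow_mul_of_descent hρ ha
    (fun t _ => by linarith [hHdef t, hAm t]) hdesc T

/-- Meta convergence theorem, strongly convex case: with `F = f + Σ_k Ψ_k`, `Γ ≥ L_max`,
nonnegative amortization terms `A⁺, A⁻` with `A⁺ 1 = 0`, `H t = F(xᵗ) + A⁺ t − A⁻ t`,
and the per-step inequality
`H t − H (t+1) ≥ (α/n) Σ_k Ŵ_k(∇_k f(xᵗ), x_kᵗ) + (β/n) A⁺ t`,
if `F` is `μ_F`-strongly convex and `f` is `μ_f`-strongly convex with `μ_f ≤ Γ`, then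
`H (T+1) ≤ (1 − min{(α/(2n))·μ_F/(μ_F+Γ−μ_f), β/(2n)})^T · F(x¹)`. -/
theorem meta_convergence_strongly_convex
    {n : ℕ} (hn : 0 < n)
    (f F : EuclideanSpace ℝ (Fin n) → ℝ)
    (Ψ : Fin n → ℝ → ℝ) (hΨ : ∀ k, ConvexOn ℝ Set.univ (Ψ k))
    (hFdef : ∀ y, F y = f y + ∑ k, Ψ k (y k))
    (hFnonneg : ∀ y, 0 ≤ F y) (hFzero : ∃ y, F y = 0)
    (gradf : EuclideanSpace ℝ (Fin n) → EuclideanSpace ℝ (Fin n))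
    (hgrad : ∀ y, HasGradientAt f (gradf y) y)
    (Γ Lmax μF μf : ℝ) (hΓpos : 0 < Γ) (hΓ : Lmax ≤ Γ) (hμfΓ : μf ≤ Γ)
    (hμF : 0 < μF) (hμf : 0 < μf)
    (hsmooth : ∀ (y : EuclideanSpace ℝ (Fin n)) (k : Fin n) (r : ℝ),
      f (y + EuclideanSpace.single k r) ≤ f y + gradf y k * r + Lmax / 2 * r ^ 2)
    (hFsc : StrongConvexOn Set.univ μF F)
    (hfsc : StrongConvexOn Set.univ μf f)
    (dW : Fin n → ℝ → ℝ → ℝ)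
    (hdW : ∀ (k : Fin n) (g z d : ℝ),
      g * dW k g z + Γ * (dW k g z) ^ 2 / 2 + Ψ k (z + dW k g z) - Ψ k z
        ≤ g * d + Γ * d ^ 2 / 2 + Ψ k (z + d) - Ψ k z)
    (x : ℕ → EuclideanSpace ℝ (Fin n))
    (Ap Am : ℕ → ℝ) (hAp : ∀ t, 0 ≤ Ap t) (hAm : ∀ t, 0 ≤ Am t) (hAp1 : Ap 1 = 0)
    (H : ℕ → ℝ) (hHdef : ∀ t, H t = F (x t) + Ap t - Am t)
    (α β : ℝ) (hα : 0 < α) (hβ : 0 < β)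
    (ha : ∀ t ≥ 1, 0 ≤ H t)
    (hb : ∀ t ≥ 1, H (t + 1) ≤ H t)
    (hc : ∀ t ≥ 1, H t - H (t + 1) ≥
      α / n * (∑ k,
        -(gradf (x t) k * dW k (gradf (x t) k) (x t k)
          + Γ * (dW k (gradf (x t) k) (x t k)) ^ 2 / 2
          + Ψ k (x t k + dW k (gradf (x t) k) (x t k)) - Ψ k (x t k)))
      + β / n * Ap t) :
    ∀ T : ℕ, H (T + 1) ≤
      (1 - min (α / (2 * n) * (μF / (μF + Γ - μf))) (β / (2 * n))) ^ T * F (x 1) :=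
  meta_convergence_strongly_convex_general f F Ψ hFdef hFnonneg hFzero gradf hgrad Γ μF μf hμfΓ hμF
    hFsc hfsc dW hdW x Ap Am hAp hAm hAp1 H hHdef α β hα hβ ha hc
end

section
/- Meta convergence theorem (convex case): Under the same amortization hypotheses — H(t) := F(x^t) + A⁺(t) − A⁻(t) with A⁺, A⁻ ≥ 0, A⁺(1) = 0, and H(t) − H(t+1) ≥ (α/n)·Σ_k Ŵ_k(∇_k f(x^t), x_k^t) + (β/n)·A⁺(t) for all t — and assuming F is convex, H is nonincreasing with H(t) ≥ 0, and the progress bound Σ_k Ŵ_k(∇_k f(x), x_k) ≥ min{1/2, F(x)/(2Γ𝓡²)}·F(x) holds with 𝓡 the level-set radius at x¹, then for all T ≥ 0: H(T+1) ≤ F(x¹) / (1 + min{ β/(2n·F(x¹)), α/(4n·F(x¹)), α/(8nΓ𝓡²) }·F(x¹)·T). -/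
lemma mc_aux1 (β nn F1 Ht A : ℝ) (hβ : 0 < β) (hn : 0 < nn) (hF1 : 0 < F1)
    (h : Ht ≤ F1) (h2 : Ht ≤ 2 * A) (h3 : 0 ≤ Ht) :
    β / (2 * nn * F1) * Ht ^ 2 ≤ β / nn * A := by
  rw [div_mul_eq_mul_div, div_mul_eq_mul_div, div_le_div_iff₀ (by positivity) hn]
  nlinarith [mul_le_mul h h2 h3 hF1.le, mul_pos hβ hn]

lemma mc_aux2 (α nn F1 Ht W : ℝ) (hα : 0 < α) (hn : 0 < nn) (hF1 : 0 < F1)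
    (h : Ht ≤ F1) (h2 : Ht ≤ 4 * W) (h3 : 0 ≤ Ht) :
    α / (4 * nn * F1) * Ht ^ 2 ≤ α / nn * W := by
  rw [div_mul_eq_mul_div, div_mul_eq_mul_div, div_le_div_iff₀ (by positivity) hn]
  nlinarith [mul_le_mul h h2 h3 hF1.le, mul_pos hα hn]

lemma mc_aux3 (α nn Γ R Ht Ft W : ℝ) (hα : 0 < α) (hn : 0 < nn) (hΓ : 0 < Γ) (hR : 0 < R)
    (h1 : Ft * Ft ≤ W * (2 * Γ * R ^ 2)) (h2 : Ht ≤ 2 * Ft) (h3 : 0 ≤ Ht) :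
    α / (8 * nn * Γ * R ^ 2) * Ht ^ 2 ≤ α / nn * W := by
  rw [div_mul_eq_mul_div, div_mul_eq_mul_div, div_le_div_iff₀ (by positivity) hn]
  nlinarith [mul_le_mul_of_nonneg_left h1 (by positivity : (0:ℝ) ≤ α * nn),
    mul_le_mul_of_nonneg_left (mul_self_le_mul_self h3 h2) (by positivity : (0:ℝ) ≤ α * nn)]

lemma mc_aux4 (ε F1 a b k : ℝ) (hε : 0 < ε) (hF1 : 0 < F1) (hb : 0 < b)
    (hba : b ≤ a) (hk : ε * a ^ 2 ≤ a - b) (h1 : a * (1 + ε * F1 * k) ≤ F1)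
    (hknn : 0 ≤ k) : b * (1 + ε * F1 * (k + 1)) ≤ F1 := by
  have hapos : 0 < a := lt_of_lt_of_le hb hba
  have hba2 : b * (1 + ε * a) ≤ a := by
    nlinarith [mul_le_mul_of_nonneg_left hba (mul_nonneg hε.le hapos.le)]
  have hd' : (0:ℝ) ≤ 1 + ε * F1 * (k + 1) := by positivity
  nlinarith [mul_le_mul_of_nonneg_right hba2 hd',
    mul_le_mul_of_nonneg_right h1 (mul_nonneg hε.le hapos.le),
    mul_pos hε hapos]

/-- Meta convergence theorem, convex case: under the amortization hypotheses
(`A⁺, A⁻ ≥ 0`, `A⁺ 1 = 0`, `H t = F(xᵗ) + A⁺ t − A⁻ t`,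
`H t − H (t+1) ≥ (α/n) Σ_k Ŵ_k(∇_k f(xᵗ), x_kᵗ) + (β/n) A⁺ t`), with `F` convex,
`H` nonincreasing and nonnegative, and the progress bound
`Σ_k Ŵ_k(∇_k f(xᵗ), x_kᵗ) ≥ min{1/2, F(xᵗ)/(2Γ𝓡²)} · F(xᵗ)` along the iterates,
then `H (T+1) ≤ F(x¹) / (1 + min{β/(2n F(x¹)), α/(4n F(x¹)), α/(8nΓ𝓡²)} · F(x¹) · T)`. -/
theorem meta_convergence_convex
    {n : ℕ} (hn : 0 < n)
    (f F : EuclideanSpace ℝ (Fin n) → ℝ)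
    (Ψ : Fin n → ℝ → ℝ) (hΨ : ∀ k, ConvexOn ℝ Set.univ (Ψ k))
    (hFdef : ∀ y, F y = f y + ∑ k, Ψ k (y k))
    (hFconv : ConvexOn ℝ Set.univ F)
    (hFnonneg : ∀ y, 0 ≤ F y) (hFzero : ∃ y, F y = 0)
    (gradf : EuclideanSpace ℝ (Fin n) → EuclideanSpace ℝ (Fin n))
    (hgrad : ∀ y, HasGradientAt f (gradf y) y)
    (Γ R : ℝ) (hΓpos : 0 < Γ) (hR : 0 < R)
    (dW : Fin n → ℝ → ℝ → ℝ)
    (hdW : ∀ (k : Fin n) (g z d : ℝ),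
      g * dW k g z + Γ * (dW k g z) ^ 2 / 2 + Ψ k (z + dW k g z) - Ψ k z
        ≤ g * d + Γ * d ^ 2 / 2 + Ψ k (z + d) - Ψ k z)
    (x : ℕ → EuclideanSpace ℝ (Fin n))
    (Ap Am : ℕ → ℝ) (hAp : ∀ t, 0 ≤ Ap t) (hAm : ∀ t, 0 ≤ Am t) (hAp1 : Ap 1 = 0)
    (H : ℕ → ℝ) (hHdef : ∀ t, H t = F (x t) + Ap t - Am t)
    (α β : ℝ) (hα : 0 < α) (hβ : 0 < β)
    (ha : ∀ t ≥ 1, 0 ≤ H t)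
    (hb : ∀ t ≥ 1, H (t + 1) ≤ H t)
    (hc : ∀ t ≥ 1, H t - H (t + 1) ≥
      α / n * (∑ k,
        -(gradf (x t) k * dW k (gradf (x t) k) (x t k)
          + Γ * (dW k (gradf (x t) k) (x t k)) ^ 2 / 2
          + Ψ k (x t k + dW k (gradf (x t) k) (x t k)) - Ψ k (x t k)))
      + β / n * Ap t)
    (hprg : ∀ t ≥ 1,
      (∑ k,
        -(gradf (x t) k * dW k (gradf (x t) k) (x t k)
          + Γ * (dW k (gradf (x t) k) (x t k)) ^ 2 / 2
          + Ψ k (x t k + dW k (gradf (x t) k) (x t k)) - Ψ k (x t k)))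
        ≥ min (1 / 2) (F (x t) / (2 * Γ * R ^ 2)) * F (x t)) :
    ∀ T : ℕ, H (T + 1) ≤
      F (x 1) / (1 + min (β / (2 * n * F (x 1)))
        (min (α / (4 * n * F (x 1))) (α / (8 * n * Γ * R ^ 2))) * F (x 1) * T) := by
  intro T
  have hnpos : (0:ℝ) < (n:ℝ) := by exact_mod_cast hn
  have hF1nn : 0 ≤ F (x 1) := hFnonneg _
  have hmono : ∀ s : ℕ, H (s + 1) ≤ H 1 := by
    intro s
    induction s with
    | zero => exact le_refl _
    | succ k ih => exact le_trans (hb (k+1) (by omega)) ih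
  have hH1 : H 1 = F (x 1) - Am 1 := by rw [hHdef 1, hAp1]; ring
  rcases eq_or_lt_of_le hF1nn with h0 | hF1pos
  · have hle : H (T+1) ≤ 0 := le_trans (hmono T) (by rw [hH1, ← h0]; linarith [hAm 1])
    rw [← h0]
    simpa using hle
  · set F1 := F (x 1) with hF1def
    set ε := min (β / (2 * (n:ℝ) * F1)) (min (α / (4 * (n:ℝ) * F1)) (α / (8 * (n:ℝ) * Γ * R ^ 2))) with hεdef
    have hεpos : 0 < ε := by
      refine lt_min (div_pos hβ (by positivity)) (lt_min (div_pos hα (by positivity)) (div_pos hα (by positivity)))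
    have hHtF1 : ∀ t ≥ 1, H t ≤ F1 := by
      intro t ht
      obtain ⟨s, rfl⟩ : ∃ s, t = s + 1 := ⟨t - 1, by omega⟩
      exact (hmono s).trans (by rw [hH1]; linarith [hAm 1])
    have hkey : ∀ t ≥ 1, ε * H t ^ 2 ≤ H t - H (t+1) := by
      intro t ht
      have hc' := hc t ht
      have hp' := hprg t ht
      set Wt := (∑ k,
        -(gradf (x t) k * dW k (gradf (x t) k) (x t k)
          + Γ * (dW k (gradf (x t) k) (x t k)) ^ 2 / 2
          + Ψ k (x t k + dW k (gradf (x t) k) (x t k)) - Ψ k (x t k))) with hWdef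
      have hHt := ha t ht
      have hHF1 := hHtF1 t ht
      have hFt : 0 ≤ F (x t) := hFnonneg _
      have hApt := hAp t
      have hAmt := hAm t
      have hHeq := hHdef t
      have h2ΓR : (0:ℝ) < 2 * Γ * R ^ 2 := by positivity
      have hWnn : 0 ≤ Wt :=
        le_trans (mul_nonneg (le_min (by norm_num) (div_nonneg hFt h2ΓR.le)) hFt) hp'
      by_cases hcase : F (x t) ≤ Ap t
      · have hε1 : ε ≤ β / (2 * (n:ℝ) * F1) := min_le_left _ _
        have key : β / (2 * (n:ℝ) * F1) * H t ^ 2 ≤ β / (n:ℝ) * Ap t :=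
          mc_aux1 β n F1 (H t) (Ap t) hβ hnpos hF1pos hHF1 (by linarith) hHt
        have h1 : ε * H t ^ 2 ≤ β / (2 * (n:ℝ) * F1) * H t ^ 2 :=
          mul_le_mul_of_nonneg_right hε1 (sq_nonneg _)
        have hαW : 0 ≤ α / (n:ℝ) * Wt := mul_nonneg (by positivity) hWnn
        linarith
      · push_neg at hcase
        have hH2F : H t ≤ 2 * F (x t) := by linarith
        have hβA : 0 ≤ β / (n:ℝ) * Ap t := mul_nonneg (by positivity) hApt
        rcases le_or_gt (1/2 : ℝ) (F (x t) / (2 * Γ * R ^ 2)) with hm | hm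
        · rw [min_eq_left hm] at hp'
          have hε2 : ε ≤ α / (4 * (n:ℝ) * F1) := le_trans (min_le_right _ _) (min_le_left _ _)
          have key : α / (4 * (n:ℝ) * F1) * H t ^ 2 ≤ α / (n:ℝ) * Wt :=
            mc_aux2 α n F1 (H t) Wt hα hnpos hF1pos hHF1 (by linarith) hHt
          have h1 : ε * H t ^ 2 ≤ α / (4 * (n:ℝ) * F1) * H t ^ 2 :=
            mul_le_mul_of_nonneg_right hε2 (sq_nonneg _)
          linarith
        · rw [min_eq_right hm.le] at hp'
          rw [ge_iff_le, div_mul_eq_mul_div, div_le_iff₀ h2ΓR] at hp'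
          have hε3 : ε ≤ α / (8 * (n:ℝ) * Γ * R ^ 2) :=
            le_trans (min_le_right _ _) (min_le_right _ _)
          have key : α / (8 * (n:ℝ) * Γ * R ^ 2) * H t ^ 2 ≤ α / (n:ℝ) * Wt :=
            mc_aux3 α n Γ R (H t) (F (x t)) Wt hα hnpos hΓpos hR hp' hH2F hHt
          have h1 : ε * H t ^ 2 ≤ α / (8 * (n:ℝ) * Γ * R ^ 2) * H t ^ 2 :=
            mul_le_mul_of_nonneg_right hε3 (sq_nonneg _)
          linarith
    have main : ∀ k : ℕ, H (k + 1) ≤ F1 / (1 + ε * F1 * k) := by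
      intro k
      induction k with
      | zero => simpa using hHtF1 1 le_rfl
      | succ k ih =>
        have hknn : (0:ℝ) ≤ (k:ℝ) := Nat.cast_nonneg k
        have hd : (0:ℝ) < 1 + ε * F1 * k := by
          have := mul_nonneg (mul_nonneg hεpos.le hF1pos.le) hknn
          linarith
        have hd' : (0:ℝ) < 1 + ε * F1 * ((k:ℝ) + 1) := by
          have h1 := mul_nonneg (mul_nonneg hεpos.le hF1pos.le) hknn
          have h2 := (mul_pos hεpos hF1pos).le
          nlinarith
        push_cast
        by_cases hpos : 0 < H (k + 1 + 1)
        · have hk := hkey (k+1) (by omega)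
          have hbk := hb (k+1) (by omega)
          have h1 : H (k+1) * (1 + ε * F1 * k) ≤ F1 := by
            rw [le_div_iff₀ hd] at ih; exact ih
          rw [le_div_iff₀ hd']
          exact mc_aux4 ε F1 (H (k+1)) (H (k+1+1)) k hεpos hF1pos hpos hbk hk h1 hknn
        · push_neg at hpos
          exact le_trans hpos (le_of_lt (div_pos hF1pos hd'))
    exact main T
end
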